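/- Suffix replacement: for all words z̄₁, z̄₂, w̄ over {l, r, λ, ρ, n}, if red(z̄₁w̄) = red(z̄₂w̄), then for every word ȳ, red(z̄₁ȳ) = red(z̄₂ȳ). -/

import Mathlib

/-- The alphabet {l, r, λ, ρ, n}. -/
inductive Alpha : Type
  | l | r | lam | rho | n
deriving DecidableEq

/-- Finite words over the alphabet. -/
abbrev Word := List Alpha

/-- Immediate reduction ↝′ on words: x̄lλȳ ↝′ x̄ρȳ, x̄rλȳ ↝′ x̄ȳ, x̄λrȳ ↝′ x̄ȳ,
x̄ρrȳ ↝′ x̄lȳ, x̄nnȳ ↝′ x̄ȳ. -/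
inductive Step : Word → Word → Prop
  | llam (x y : Word) : Step (x ++ [.l, .lam] ++ y) (x ++ [.rho] ++ y)
  | rlam (x y : Word) : Step (x ++ [.r, .lam] ++ y) (x ++ y)
  | lamr (x y : Word) : Step (x ++ [.lam, .r] ++ y) (x ++ y)
  | rhor (x y : Word) : Step (x ++ [.rho, .r] ++ y) (x ++ [.l] ++ y)
  | nn (x y : Word) : Step (x ++ [.n, .n] ++ y) (x ++ y)

/-- A word is reduced if no immediate reduction step applies to it. -/
def Reduced (w : Word) : Prop := ∀ v, ¬ Step w v

/-- Reduction ↝ is the reflexive-transitive closure of immediate reduction. -/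
def Reduces : Word → Word → Prop := Relation.ReflTransGen Step

open Classical in
/-- red(w): the (unique) reduced word to which w reduces. -/
noncomputable def red (w : Word) : Word :=
  if h : ∃ v, Reduces w v ∧ Reduced v then h.choose else w

def contract : Alpha → Alpha → Option Word
  | .l, .lam => some [.rho]
  | .r, .lam => some []
  | .lam, .r => some []
  | .rho, .r => some [.l]
  | .n, .n => some []
  | _, _ => none

lemma step_iff {w u : Word} : Step w u ↔
    ∃ x a b y c, contract a b = some c ∧ w = x ++ [a, b] ++ y ∧ u = x ++ c ++ y := by
  constructor
  · rintro (⟨x,y⟩|⟨x,y⟩|⟨x,y⟩|⟨x,y⟩|⟨x,y⟩)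
    · exact ⟨x, .l, .lam, y, [.rho], rfl, rfl, rfl⟩
    · exact ⟨x, .r, .lam, y, [], rfl, rfl, by simp⟩
    · exact ⟨x, .lam, .r, y, [], rfl, rfl, by simp⟩
    · exact ⟨x, .rho, .r, y, [.l], rfl, rfl, rfl⟩
    · exact ⟨x, .n, .n, y, [], rfl, rfl, by simp⟩
  · rintro ⟨x, a, b, y, c, hc, rfl, rfl⟩
    cases a <;> cases b <;> simp [contract] at hc <;> subst hc
    · exact Step.llam x y
    · simpa using Step.rlam x y
    · simpa using Step.lamr x y
    · exact Step.rhor x y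
    · simpa using Step.nn x y

lemma reduced_iff_chain' {w : Word} :
    Reduced w ↔ w.Chain' (fun a b => contract a b = none) := by
  constructor
  · intro h
    by_contra hc
    suffices hs : ∃ v, Step w v by obtain ⟨v, hv⟩ := hs; exact h v hv
    clear h
    induction w with
    | nil => simp [List.Chain'] at hc
    | cons a w ih =>
      cases w with
      | nil => simp [List.Chain'] at hc
      | cons b t =>
        simp only [List.Chain', List.isChain_cons_cons] at hc
        push_neg at hc
        by_cases hab : contract a b = none
        · obtain ⟨v, hv⟩ := ih (hc hab)
          rw [step_iff] at hv
          obtain ⟨x, p, q, y, c, h1, h2, h3⟩ := hv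
          exact ⟨a :: x ++ c ++ y, step_iff.2 ⟨a :: x, p, q, y, c, h1, by simp [h2], by simp⟩⟩
        · obtain ⟨c, hc2⟩ := Option.ne_none_iff_exists'.mp hab
          exact ⟨c ++ t, step_iff.2 ⟨[], a, b, t, c, hc2, by simp, by simp⟩⟩
  · intro h v hv
    rw [step_iff] at hv
    obtain ⟨x, a, b, y, c, h1, h2, -⟩ := hv
    subst h2
    simp only [List.Chain'] at h
    rw [List.append_assoc, List.isChain_append] at h
    have := (List.isChain_cons_cons.mp h.2.1).1
    rw [this] at h1
    exact Option.noConfusion rfl (heq_of_eq h1)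

def cons' : Alpha → Word → Word
  | .l, .lam :: v => cons' .rho v
  | .r, .lam :: v => v
  | .lam, .r :: v => v
  | .rho, .r :: v => cons' .l v
  | .n, .n :: v => v
  | a, v => a :: v

noncomputable def nf (w : Word) : Word := w.foldr cons' []

lemma nf_nil : nf [] = [] := rfl
lemma nf_cons (a : Alpha) (w : Word) : nf (a :: w) = cons' a (nf w) := rfl

lemma nf_append (s t : Word) : nf (s ++ t) = s.foldr cons' (nf t) := by
  unfold nf; rw [List.foldr_append]

lemma cons'_no_redex {a b : Alpha} {m : Word} (h : contract a b = none) :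
    cons' a (b :: m) = a :: b :: m := by
  cases a <;> cases b <;> first | rfl | exact absurd h (by simp [contract])

lemma cons'_nil (a : Alpha) : cons' a [] = [a] := by cases a <;> rfl

lemma reduced_cons' {a : Alpha} {v : Word} (h : Reduced v) : Reduced (cons' a v) := by
  rw [reduced_iff_chain'] at *
  induction a, v using cons'.induct with
  | case1 v ih => exact ih (List.isChain_cons.mp h).2
  | case2 v => exact (List.isChain_cons.mp h).2
  | case3 v => exact (List.isChain_cons.mp h).2
  | case4 v ih => exact ih (List.isChain_cons.mp h).2
  | case5 v => exact (List.isChain_cons.mp h).2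
  | case6 a v h1 h2 h3 h4 h5 =>
    cases v with
    | nil => rw [cons'_nil]; simp [List.Chain']
    | cons b m =>
      have hab : contract a b = none := by
        cases a <;> cases b <;> first
          | rfl
          | exact (h1 _ rfl rfl).elim
          | exact (h2 _ rfl rfl).elim
          | exact (h3 _ rfl rfl).elim
          | exact (h4 _ rfl rfl).elim
          | exact (h5 _ rfl rfl).elim
      rw [cons'_no_redex hab]
      exact List.isChain_cons_cons.mpr ⟨hab, h⟩

lemma reduced_nf (w : Word) : Reduced (nf w) := by
  induction w with
  | nil => rw [reduced_iff_chain']; simp [nf, List.Chain']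
  | cons a w ih => exact reduced_cons' ih

lemma cons'_l_lam (m : Word) : cons' .l (cons' .lam m) = cons' .rho m := by
  cases m with
  | nil => rfl
  | cons b m' => cases b <;> rfl

lemma cons'_rho_r (m : Word) : cons' .rho (cons' .r m) = cons' .l m := by
  cases m with
  | nil => rfl
  | cons b m' => cases b <;> rfl

lemma cons'_r_lam {m : Word} (hm : m.Chain' (fun a b => contract a b = none)) :
    cons' .r (cons' .lam m) = m := by
  cases m with
  | nil => rfl
  | cons b m' =>
    cases b <;> first
      | rfl
      | (cases m' with
         | nil => rfl
         | cons c m'' =>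
           cases c <;> first
             | rfl
             | exact absurd (List.isChain_cons_cons.mp hm).1 (by simp [contract]))

lemma cons'_lam_r {m : Word} (hm : m.Chain' (fun a b => contract a b = none)) :
    cons' .lam (cons' .r m) = m := by
  cases m with
  | nil => rfl
  | cons b m' =>
    cases b <;> first
      | rfl
      | (cases m' with
         | nil => rfl
         | cons c m'' =>
           cases c <;> first
             | rfl
             | exact absurd (List.isChain_cons_cons.mp hm).1 (by simp [contract]))

lemma cons'_n_n {m : Word} (hm : m.Chain' (fun a b => contract a b = none)) :
    cons' .n (cons' .n m) = m := by
  cases m with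
  | nil => rfl
  | cons b m' =>
    cases b <;> first
      | rfl
      | (cases m' with
         | nil => rfl
         | cons c m'' =>
           cases c <;> first
             | rfl
             | exact absurd (List.isChain_cons_cons.mp hm).1 (by simp [contract]))

lemma nf_step {u v : Word} (h : Step u v) : nf u = nf v := by
  rw [step_iff] at h
  obtain ⟨x, a, b, y, c, hc, rfl, rfl⟩ := h
  have hy : (nf y).Chain' (fun a b => contract a b = none) :=
    reduced_iff_chain'.mp (reduced_nf y)
  rw [List.append_assoc, List.append_assoc, nf_append x, nf_append x]
  refine congrArg (fun m => List.foldr cons' m x) ?_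
  cases a <;> cases b <;> simp [contract] at hc <;> subst hc <;>
    simp only [nf_cons, List.nil_append, List.cons_append, List.singleton_append]
  · exact cons'_l_lam (nf y)
  · exact cons'_r_lam hy
  · exact cons'_lam_r hy
  · exact cons'_rho_r (nf y)
  · exact cons'_n_n hy

lemma nf_reduces {u v : Word} (h : Reduces u v) : nf u = nf v := by
  induction h with
  | refl => rfl
  | tail _ h2 ih => exact ih.trans (nf_step h2)

lemma nf_reduced_fix {v : Word} (h : Reduced v) : nf v = v := by
  rw [reduced_iff_chain'] at h
  induction v with
  | nil => rfl
  | cons a v ih =>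
    rw [nf_cons, ih (List.isChain_cons.mp h).2]
    cases v with
    | nil => exact cons'_nil a
    | cons b m => exact cons'_no_redex (List.isChain_cons_cons.mp h).1

lemma step_cons {u v : Word} (a : Alpha) (h : Step u v) : Step (a :: u) (a :: v) := by
  rw [step_iff] at h ⊢
  obtain ⟨x, p, q, y, c, hc, rfl, rfl⟩ := h
  exact ⟨a :: x, p, q, y, c, hc, by simp, by simp⟩

lemma reduces_cons' (a : Alpha) (v : Word) : Reduces (a :: v) (cons' a v) := by
  induction a, v using cons'.induct with
  | case1 v ih =>
    exact Relation.ReflTransGen.head (step_iff.2 ⟨[], .l, .lam, v, [.rho], rfl, rfl, rfl⟩) ih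
  | case2 v =>
    exact Relation.ReflTransGen.single (step_iff.2 ⟨[], .r, .lam, v, [], rfl, rfl, rfl⟩)
  | case3 v =>
    exact Relation.ReflTransGen.single (step_iff.2 ⟨[], .lam, .r, v, [], rfl, rfl, rfl⟩)
  | case4 v ih =>
    exact Relation.ReflTransGen.head (step_iff.2 ⟨[], .rho, .r, v, [.l], rfl, rfl, rfl⟩) ih
  | case5 v =>
    exact Relation.ReflTransGen.single (step_iff.2 ⟨[], .n, .n, v, [], rfl, rfl, rfl⟩)
  | case6 a v h1 h2 h3 h4 h5 =>
    have : cons' a v = a :: v := by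
      cases v with
      | nil => exact cons'_nil a
      | cons b m =>
        apply cons'_no_redex
        cases a <;> cases b <;> first
          | rfl
          | exact (h1 _ rfl rfl).elim
          | exact (h2 _ rfl rfl).elim
          | exact (h3 _ rfl rfl).elim
          | exact (h4 _ rfl rfl).elim
          | exact (h5 _ rfl rfl).elim
    rw [this]
    exact Relation.ReflTransGen.refl

lemma reduces_cons {u v : Word} (a : Alpha) (h : Reduces u v) :
    Reduces (a :: u) (a :: v) := by
  induction h with
  | refl => exact Relation.ReflTransGen.refl
  | tail _ h2 ih => exact Relation.ReflTransGen.tail ih (step_cons a h2)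

lemma reduces_nf (w : Word) : Reduces w (nf w) := by
  induction w with
  | nil => exact Relation.ReflTransGen.refl
  | cons a w ih =>
    exact Relation.ReflTransGen.trans (reduces_cons a ih) (reduces_cons' a (nf w))

lemma red_eq_nf (w : Word) : red w = nf w := by
  have hex : ∃ v, Reduces w v ∧ Reduced v := ⟨nf w, reduces_nf w, reduced_nf w⟩
  rw [red, dif_pos hex]
  obtain ⟨h1, h2⟩ := hex.choose_spec
  rw [← nf_reduced_fix h2, nf_reduces h1]

lemma step_append_right {u v : Word} (t : Word) (h : Step u v) :
    Step (u ++ t) (v ++ t) := by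
  rw [step_iff] at h ⊢
  obtain ⟨x, p, q, y, c, hc, rfl, rfl⟩ := h
  exact ⟨x, p, q, y ++ t, c, hc, by simp, by simp⟩

lemma reduces_append_right {u v : Word} (t : Word) (h : Reduces u v) :
    Reduces (u ++ t) (v ++ t) := by
  induction h with
  | refl => exact Relation.ReflTransGen.refl
  | tail _ h2 ih => exact Relation.ReflTransGen.tail ih (step_append_right t h2)

lemma nf_nf_append (s t : Word) : nf (s ++ t) = nf (nf s ++ t) :=
  nf_reduces (reduces_append_right t (reduces_nf s))

lemma reduced_snoc {u : Word} (a : Alpha) (hu : Reduced u)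
    (ha : ∀ b : Alpha, contract b a = none) : Reduced (u ++ [a]) := by
  rw [reduced_iff_chain'] at hu ⊢
  simp only [List.Chain']
  rw [List.isChain_append]
  exact ⟨hu, by simp, by intro x _ y hy; simp at hy; subst hy; exact ha x⟩

lemma nf_snoc_pair {u : Word} {a b : Alpha} (h : contract a b = some []) :
    nf (u ++ [a, b]) = nf u := by
  have : Step (u ++ [a, b]) u := step_iff.2 ⟨u, a, b, [], [], h, by simp, by simp⟩
  exact nf_step this

lemma cancel_letter {u v : Word} (a : Alpha) (hu : Reduced u) (hv : Reduced v)
    (h : nf (u ++ [a]) = nf (v ++ [a])) : u = v := by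
  have inv : ∀ b : Alpha, contract a b = some [] → u = v := by
    intro b hb
    have h2 : nf ((u ++ [a]) ++ [b]) = nf ((v ++ [a]) ++ [b]) := by
      rw [nf_nf_append (u ++ [a]), nf_nf_append (v ++ [a]), h]
    rw [List.append_assoc, List.append_assoc] at h2
    have hu2 : nf (u ++ [a, b]) = nf u := nf_snoc_pair hb
    have hv2 : nf (v ++ [a, b]) = nf v := nf_snoc_pair hb
    simp only [List.singleton_append] at h2
    rw [hu2, hv2, nf_reduced_fix hu, nf_reduced_fix hv] at h2
    exact h2
  cases a with
  | l =>
    have h1 := nf_reduced_fix (reduced_snoc .l hu (by intro b; cases b <;> rfl))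
    have h2 := nf_reduced_fix (reduced_snoc .l hv (by intro b; cases b <;> rfl))
    rw [h1, h2] at h
    exact List.append_inj_left' h rfl
  | rho =>
    have h1 := nf_reduced_fix (reduced_snoc .rho hu (by intro b; cases b <;> rfl))
    have h2 := nf_reduced_fix (reduced_snoc .rho hv (by intro b; cases b <;> rfl))
    rw [h1, h2] at h
    exact List.append_inj_left' h rfl
  | r => exact inv .lam rfl
  | lam => exact inv .r rfl
  | n => exact inv .n rfl

lemma cancel (w : Word) : ∀ u v : Word, Reduced u → Reduced v →
    nf (u ++ w) = nf (v ++ w) → u = v := by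
  induction w with
  | nil =>
    intro u v hu hv h
    simp only [List.append_nil] at h
    rwa [nf_reduced_fix hu, nf_reduced_fix hv] at h
  | cons a w ih =>
    intro u v hu hv h
    have hu' : u ++ a :: w = (u ++ [a]) ++ w := by simp
    have hv' : v ++ a :: w = (v ++ [a]) ++ w := by simp
    rw [hu', hv', nf_nf_append (u ++ [a]), nf_nf_append (v ++ [a])] at h
    have := ih (nf (u ++ [a])) (nf (v ++ [a])) (reduced_nf _) (reduced_nf _) h
    exact cancel_letter a hu hv this

/-- Suffix replacement: if red(z̄₁w̄) = red(z̄₂w̄), then red(z̄₁ȳ) = red(z̄₂ȳ) for every ȳ. -/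
theorem suffix_replacement {z1 z2 w : Word} (h : red (z1 ++ w) = red (z2 ++ w)) :
    ∀ y : Word, red (z1 ++ y) = red (z2 ++ y) := by
  rw [red_eq_nf, red_eq_nf, nf_nf_append z1, nf_nf_append z2] at h
  have hz : nf z1 = nf z2 :=
    cancel w (nf z1) (nf z2) (reduced_nf z1) (reduced_nf z2) h
  intro y
  rw [red_eq_nf, red_eq_nf, nf_nf_append z1, nf_nf_append z2, hz]
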